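/- arXiv:2001.01316 — 3 statements merged into one kernel-verified Lean document; each statement's English description precedes it below -/
import Mathlib

section
/- Let R be a unital ring with an involutive anti-automorphism x ↦ x*. Suppose X, Y ∈ R with Y invertible and X·X* = −(Y + Y*). Then the following 3×3 matrix identity holds: [[1,0,0],[−X*,1,0],[Y,X,1]] = (( (Y*)⁻¹X, Y⁻¹ )⁺) · s_y · i_M(Y, 1 + X*Y⁻¹X) · ((Y⁻¹X, Y⁻¹)⁺), where (A,B)⁺ denotes [[1,A,B],[0,1,−A*],[0,0,1]], s_y is the antidiagonal matrix with entries s_y(1,3)=s_y(2,2)=s_y(3,1)=1, and i_M(g,h) = diag(g, h, (g*)⁻¹). -/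
open Matrix

variable {R : Type*}

/-- `(A,B)⁺ = [[1,A,B],[0,1,−A*],[0,0,1]]`. -/
def uPlus [Ring R] [StarRing R] (A B : R) : Matrix (Fin 3) (Fin 3) R :=
  !![1, A, B; 0, 1, -star A; 0, 0, 1]

/-- `(A,B)⁻ = [[1,0,0],[−A*,1,0],[B,A,1]]`. -/
def uMinus [Ring R] [StarRing R] (A B : R) : Matrix (Fin 3) (Fin 3) R :=
  !![1, 0, 0; -star A, 1, 0; B, A, 1]

/-- The antidiagonal permutation matrix `s_y`. -/
def sy (R : Type*) [Ring R] : Matrix (Fin 3) (Fin 3) R :=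
  !![0, 0, 1; 0, 1, 0; 1, 0, 0]

/-- `i_M(g,h) = diag(g, h, (g*)⁻¹)`. -/
noncomputable def iM [Ring R] [StarRing R] (g h : R) : Matrix (Fin 3) (Fin 3) R :=
  !![g, 0, 0; 0, h, 0; 0, 0, Ring.inverse (star g)]

private theorem aux_decomp [Ring R] [StarRing R] (X Y u : R)
    (h1 : Y * u = 1) (h2 : u * Y = 1) (h : X * star X = -(Y + star Y)) :
    (!![1, 0, 0; -star X, 1, 0; Y, X, 1] : Matrix (Fin 3) (Fin 3) R) =
      !![1, star u * X, u; 0, 1, -star (star u * X); 0, 0, 1] *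
        !![0, 0, 1; 0, 1, 0; 1, 0, 0] *
        !![Y, 0, 0; 0, 1 + star X * u * X, 0; 0, 0, star u] *
        !![1, u * X, u; 0, 1, -star (u * X); 0, 0, 1] := by
  have h3 : star Y * star u = 1 := by rw [← StarMul.star_mul, h2, star_one]
  have h4 : star u * star Y = 1 := by rw [← StarMul.star_mul, h1, star_one]
  have H1 : ∀ t : R, Y * (u * t) = t := fun t => by rw [← mul_assoc, h1, one_mul]
  have H2 : ∀ t : R, u * (Y * t) = t := fun t => by rw [← mul_assoc, h2, one_mul]
  have H3 : ∀ t : R, star Y * (star u * t) = t := fun t => by rw [← mul_assoc, h3, one_mul]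
  have H4 : ∀ t : R, star u * (star Y * t) = t := fun t => by rw [← mul_assoc, h4, one_mul]
  have HX : ∀ t : R, X * (star X * t) = -(Y * t) - star Y * t := fun t => by
    rw [← mul_assoc, h, neg_add, add_mul, neg_mul, neg_mul]
    abel
  have HX0 : X * star X = -Y - star Y := by rw [h]; abel
  have s1 : star (u * X) = star X * star u := by rw [StarMul.star_mul]
  have s2 : star (star u * X) = star X * u := by rw [StarMul.star_mul, star_star]
  rw [Matrix.mul_fin_three, Matrix.mul_fin_three, Matrix.mul_fin_three]
  refine congrArg Matrix.of (Matrix.vec3_eq (Matrix.vec3_eq ?_ ?_ ?_)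
    (Matrix.vec3_eq ?_ ?_ ?_) (Matrix.vec3_eq ?_ ?_ ?_)) <;>
  · simp only [s1, s2, one_mul, mul_one, zero_mul, mul_zero, add_zero, zero_add, mul_add,
      add_mul, mul_neg, neg_mul, mul_sub, sub_mul, neg_neg, neg_add, mul_assoc,
      h1, h2, h3, h4, H1, H2, H3, H4, HX, HX0]
    try abel

/-- decomposition of a lower unipotent element into `supp(T_y)`
(equation (4.3) of the paper). -/
theorem lower_unipotent_decomposition [Ring R] [StarRing R] (X Y : R)
    (hY : IsUnit Y) (h : X * star X = -(Y + star Y)) :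
    uMinus X Y =
      uPlus (Ring.inverse (star Y) * X) (Ring.inverse Y) * sy R *
        iM Y (1 + star X * Ring.inverse Y * X) *
        uPlus (Ring.inverse Y * X) (Ring.inverse Y) := by
  unfold uMinus uPlus sy iM
  rw [Ring.inverse_star]
  exact aux_decomp X Y (Ring.inverse Y) (Ring.mul_inverse_cancel Y hY)
    (Ring.inverse_mul_cancel Y hY) h
end

section
/- Let R be a unital ring with an involutive anti-automorphism x ↦ x*. Suppose X, Y, ϖ ∈ R with Y and ϖ invertible, ϖ* = −ϖ, and X·X* = −(Y + Y*). Then the following 3×3 matrix identity holds: [[1,X,Y],[0,1,−X*],[0,0,1]] = (((Y*)⁻¹X, Y⁻¹)⁻) · i_M(−Yϖ, 1 + X*Y⁻¹X) · s_z · ((Y⁻¹X, Y⁻¹)⁻), where (A,B)⁻ denotes [[1,0,0],[−A*,1,0],[B,A,1]], s_z = [[0,0,−ϖ⁻¹],[0,1,0],[ϖ,0,0]], and i_M(g,h) = diag(g, h, (g*)⁻¹). -/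
open Matrix

variable {R : Type*}

/-- `s_z = [[0,0,−ϖ⁻¹],[0,1,0],[ϖ,0,0]]`. -/
noncomputable def sz [Ring R] (ϖ : R) : Matrix (Fin 3) (Fin 3) R :=
  !![0, 0, -Ring.inverse ϖ; 0, 1, 0; ϖ, 0, 0]

lemma ring_inverse_mul_rev' [Ring R] {a b : R} (ha : IsUnit a) (hb : IsUnit b) :
    Ring.inverse (a * b) = Ring.inverse b * Ring.inverse a := by
  obtain ⟨u, rfl⟩ := ha; obtain ⟨v, rfl⟩ := hb
  rw [← Units.val_mul, Ring.inverse_unit, Ring.inverse_unit, Ring.inverse_unit,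
    _root_.mul_inv_rev, Units.val_mul]

set_option maxHeartbeats 1000000 in
lemma upper_unipotent_decomposition_aux [Ring R] [StarRing R] (X Y ϖ : R)
    (hY : IsUnit Y) (hϖ : IsUnit ϖ) (hϖstar : star ϖ = -ϖ)
    (h : X * star X = -(Y + star Y)) :
    (!![1, X, Y; 0, 1, -star X; 0, 0, 1] : Matrix (Fin 3) (Fin 3) R) =
      !![(1:R),0,0; -(star X * Ring.inverse Y),1,0; Ring.inverse Y, Ring.inverse (star Y) * X,1]
      * !![-(Y*ϖ), 0, 0; 0, 1 + star X * Ring.inverse Y * X, 0; 0,0, Ring.inverse (star (-(Y*ϖ)))]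
      * !![0, 0, -Ring.inverse ϖ; 0, 1, 0; ϖ, 0, 0]
      * !![1, 0, 0; -(star X * Ring.inverse (star Y)), 1, 0; Ring.inverse Y, Ring.inverse Y * X, 1] := by
  have hYs : IsUnit (star Y) := hY.star
  have hc : ∀ c : R, X * (star X * c) = -(Y * c) - star Y * c := by
    intro c; rw [← mul_assoc, h]; noncomm_ring
  have h2 : Ring.inverse (-(star ϖ * star Y)) = Ring.inverse (star Y) * Ring.inverse ϖ := by
    rw [hϖstar, neg_mul, neg_neg, ring_inverse_mul_rev' hϖ hYs]
  rw [Matrix.mul_fin_three, Matrix.mul_fin_three, Matrix.mul_fin_three]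
  ext i j
  fin_cases i <;> fin_cases j <;> simp [Matrix.vecHead, Matrix.vecTail]
  all_goals
    simp [h2, hc, h, mul_assoc, mul_add, add_mul, mul_sub, sub_mul, neg_mul, mul_neg,
      Ring.mul_inverse_cancel _ hY, Ring.mul_inverse_cancel _ hYs, Ring.mul_inverse_cancel _ hϖ,
      Ring.inverse_mul_cancel _ hY, Ring.inverse_mul_cancel _ hYs, Ring.inverse_mul_cancel _ hϖ,
      Ring.mul_inverse_cancel_left _ _ hY, Ring.mul_inverse_cancel_left _ _ hYs,
      Ring.mul_inverse_cancel_left _ _ hϖ,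
      Ring.inverse_mul_cancel_left _ _ hY, Ring.inverse_mul_cancel_left _ _ hYs,
      Ring.inverse_mul_cancel_left _ _ hϖ]
  all_goals abel

/-- decomposition of an upper unipotent element into `supp(T_z)`
(equation (4.5) of the paper). -/
theorem upper_unipotent_decomposition [Ring R] [StarRing R] (X Y ϖ : R)
    (hY : IsUnit Y) (hϖ : IsUnit ϖ) (hϖstar : star ϖ = -ϖ)
    (h : X * star X = -(Y + star Y)) :
    uPlus X Y =
      uMinus (Ring.inverse (star Y) * X) (Ring.inverse Y) *
        iM (-(Y * ϖ)) (1 + star X * Ring.inverse Y * X) * sz ϖ *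
        uMinus (Ring.inverse Y * X) (Ring.inverse Y) := by
  have e1 : star (Ring.inverse (star Y) * X) = star X * Ring.inverse Y := by
    rw [StarMul.star_mul, ← Ring.inverse_star, star_star]
  have e2 : star (Ring.inverse Y * X) = star X * Ring.inverse (star Y) := by
    rw [StarMul.star_mul, ← Ring.inverse_star]
  rw [uPlus, uMinus, uMinus, iM, sz, e1, e2]
  exact upper_unipotent_decomposition_aux X Y ϖ hY hϖ hϖstar h
end

section
/- Let F be a finite field of odd cardinality q, ψ a nontrivial additive character of F with values in ℂ, χ the quadratic character of F, V an F-vector space of finite dimension n, and Q a quadratic form on V whose associated polar bilinear form is nondegenerate. Then (∑_{v ∈ V} ψ(Q(v)))² = (χ(−1))ⁿ · qⁿ. In particular the Gauss sum ∑_{v ∈ V} ψ(Q(v)) has absolute value q^{n/2} and its fourth power equals q^{2n}, so the normalized sum (∑_{v ∈ V} ψ(Q(v)))/q^{n/2} is a fourth root of unity. -/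
open Finset

private lemma addChar_map_sum {F : Type*} [AddCommMonoid F] (ψ : AddChar F ℂ)
    {ι : Type*} (s : Finset ι) (g : ι → F) :
    ψ (∑ i ∈ s, g i) = ∏ i ∈ s, ψ (g i) := by
  classical
  induction s using Finset.induction with
  | empty => simp
  | insert _ _ h ih => simp [Finset.sum_insert h, Finset.prod_insert h, AddChar.map_add_eq_mul, ih]

/-- one-dimensional Gauss sum: `(∑ x, ψ (a x²))² = χ(-1) q` for `a ≠ 0`. -/
private lemma one_dim_gauss_sq {F : Type*} [Field F] [Fintype F] [DecidableEq F]
    (hF : ringChar F ≠ 2) (ψ : AddChar F ℂ) (hψ : ψ ≠ 1) {a : F} (ha : a ≠ 0) :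
    (∑ x : F, ψ (a * x ^ 2)) ^ 2 =
      ((quadraticChar F (-1) : ℤ) : ℂ) * (Fintype.card F : ℂ) := by
  have hprim : ψ.IsPrimitive := AddChar.IsPrimitive.of_ne_one hψ
  set χ : MulChar F ℂ := (quadraticChar F).ringHomComp (Int.castRingHom ℂ) with hχdef
  have hχ₁ : χ ≠ 1 :=
    (MulChar.ringHomComp_ne_one_iff (Int.cast_injective (α := ℂ))).mpr
      (quadraticChar_ne_one hF)
  have hχ₂ : χ.IsQuadratic := (quadraticChar_isQuadratic F).comp _
  -- rewrite the sum as a Gauss sum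
  have hg : gaussSum χ (AddChar.mulShift ψ a) = ∑ b : F, χ b * ψ (a * b) := by
    simp [gaussSum, AddChar.mulShift_apply]
  have hz : (∑ b : F, ψ (a * b)) = 0 := by
    have h0 := AddChar.sum_eq_zero_of_ne_one (hprim ha)
    simpa [AddChar.mulShift_apply] using h0
  have key : (∑ x : F, ψ (a * x ^ 2)) = gaussSum χ (AddChar.mulShift ψ a) := by
    have h1 : ∀ b : F,
        (∑ x ∈ Finset.univ.filter (fun x : F => x ^ 2 = b), ψ (a * x ^ 2)) =
          (χ b + 1) * ψ (a * b) := by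
      intro b
      have hfilter : Finset.univ.filter (fun x : F => x ^ 2 = b) =
          {x : F | x ^ 2 = b}.toFinset := by
        ext x; simp
      have hcard : (((Finset.univ.filter (fun x : F => x ^ 2 = b)).card : ℤ)) =
          quadraticChar F b + 1 := by
        rw [hfilter]; exact_mod_cast quadraticChar_card_sqrts hF b
      rw [Finset.sum_eq_card_nsmul (b := ψ (a * b)) (fun x hx => by
        rw [Finset.mem_filter] at hx
        rw [hx.2]), nsmul_eq_mul]
      congr 1
      calc ((Finset.univ.filter (fun x : F => x ^ 2 = b)).card : ℂ)
          = ((((Finset.univ.filter (fun x : F => x ^ 2 = b)).card : ℤ)) : ℂ) := by push_cast; ring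
        _ = ((quadraticChar F b + 1 : ℤ) : ℂ) := by rw [hcard]
        _ = χ b + 1 := by push_cast; simp [hχdef, MulChar.ringHomComp_apply]
    calc (∑ x : F, ψ (a * x ^ 2))
        = ∑ b : F, ∑ x ∈ Finset.univ.filter (fun x : F => x ^ 2 = b), ψ (a * x ^ 2) :=
          (Finset.sum_fiberwise _ _ _).symm
      _ = ∑ b : F, (χ b + 1) * ψ (a * b) := Finset.sum_congr rfl fun b _ => h1 b
      _ = (∑ b : F, χ b * ψ (a * b)) + ∑ b : F, ψ (a * b) := by
          simp [add_mul, Finset.sum_add_distrib]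
      _ = gaussSum χ (AddChar.mulShift ψ a) := by rw [hg, hz, add_zero]
  have hshift := gaussSum_mulShift χ ψ (Units.mk0 a ha)
  have hχa : χ a ^ 2 = 1 := by
    have : quadraticChar F a ^ 2 = 1 := quadraticChar_sq_one ha
    rw [hχdef, MulChar.ringHomComp_apply]
    calc ((quadraticChar F a : ℤ) : ℂ) ^ 2 = (((quadraticChar F a) ^ 2 : ℤ) : ℂ) := by push_cast; ring
      _ = 1 := by rw [this]; norm_num
  have hsq : (gaussSum χ (AddChar.mulShift ψ a)) ^ 2 = (gaussSum χ ψ) ^ 2 := by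
    have : (χ (Units.mk0 a ha) * gaussSum χ (AddChar.mulShift ψ (Units.mk0 a ha))) ^ 2
        = (gaussSum χ ψ) ^ 2 := by rw [hshift]
    rw [mul_pow] at this
    simpa [Units.val_mk0, hχa] using this
  rw [key, hsq, gaussSum_sq hχ₁ hχ₂ hprim]
  simp [hχdef, MulChar.ringHomComp_apply]

/-- evaluation of the quadratic Gauss sum attached to a nondegenerate
quadratic form over a finite field of odd cardinality `q`:
`(∑_{v ∈ V} ψ(Q(v)))² = χ(−1)ⁿ qⁿ`; in particular the sum has absolute value `q^{n/2}`,
its fourth power is `q^{2n}`, and the normalized sum is a fourth root of unity. -/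
theorem gauss_sum_quadratic_form_sq
    (F : Type*) [Field F] [Fintype F] [DecidableEq F]
    (hq : Odd (Fintype.card F))
    (ψ : AddChar F ℂ) (hψ : ψ ≠ 1)
    (V : Type*) [AddCommGroup V] [Module F V] [Fintype V]
    (Q : QuadraticForm F V)
    (hQ : LinearMap.BilinForm.Nondegenerate (QuadraticMap.polarBilin Q)) :
    (∑ v : V, ψ (Q v)) ^ 2 =
        ((quadraticChar F (-1) : ℤ) : ℂ) ^ (Module.finrank F V) *
          (Fintype.card F : ℂ) ^ (Module.finrank F V) ∧
      ‖∑ v : V, ψ (Q v)‖ =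
        (Fintype.card F : ℝ) ^ ((Module.finrank F V : ℝ) / 2) ∧
      (∑ v : V, ψ (Q v)) ^ 4 = (Fintype.card F : ℂ) ^ (2 * Module.finrank F V) ∧
      ((∑ v : V, ψ (Q v)) /
          (((Fintype.card F : ℝ) ^ ((Module.finrank F V : ℝ) / 2) : ℝ) : ℂ)) ^ 4 = 1 := by
  classical
  -- basic facts
  have hF2 : ringChar F ≠ 2 := by
    intro h
    have h1 := (FiniteField.even_card_iff_char_two (F := F)).mp h
    have h2 := Nat.odd_iff.mp hq
    omega
  have h2 : (2 : F) ≠ 0 := Ring.two_ne_zero hF2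
  haveI : Invertible (2 : F) := invertibleOfNonzero h2
  haveI : FiniteDimensional F V := Module.finite_iff_finite.mpr inferInstance
  set n := Module.finrank F V with hn
  set q := Fintype.card F with hqdef
  -- nondegeneracy of the associated bilinear form
  have hsep : (QuadraticMap.associated (R := F) Q).SeparatingLeft := by
    intro m hm
    apply hQ.1 m
    intro x
    have hx := hm x
    rw [QuadraticMap.associated_apply] at hx
    have hpol : QuadraticMap.polar (⇑Q) m x = 0 := by
      have h2' : (⅟ (2 : Module.End F F)) • (Q (m + x) - Q m - Q x) = 0 := hx
      have h3 : (2 : Module.End F F) • ((⅟ (2 : Module.End F F)) • (Q (m + x) - Q m - Q x)) =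
          (2 : Module.End F F) • (0 : F) := congrArg _ h2'
      rw [smul_smul, mul_invOf_self, one_smul, smul_zero] at h3
      simpa [QuadraticMap.polar] using h3
    simpa [QuadraticMap.polarBilin_apply_apply] using hpol
  obtain ⟨w, ⟨e⟩⟩ := Q.equivalent_weightedSumSquares_units_of_nondegenerate' hsep
  -- rewrite the sum via the diagonalization
  set S := ∑ v : V, ψ (Q v) with hSdef
  have hS : S = ∏ i : Fin n, ∑ y : F, ψ ((w i : F) * y ^ 2) := by
    have h1 : S = ∑ x : Fin n → F, ψ (QuadraticMap.weightedSumSquares F w x) := by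
      calc S = ∑ v : V, ψ (QuadraticMap.weightedSumSquares F w (e v)) := by
              refine Finset.sum_congr rfl fun v _ => ?_
              rw [e.map_app]
        _ = ∑ x : Fin n → F, ψ (QuadraticMap.weightedSumSquares F w x) :=
              Equiv.sum_comp e.toLinearEquiv.toEquiv
                (fun x => ψ (QuadraticMap.weightedSumSquares F w x))
    have h2' : ∀ x : Fin n → F,
        ψ (QuadraticMap.weightedSumSquares F w x) = ∏ i : Fin n, ψ ((w i : F) * (x i) ^ 2) := by
      intro x
      rw [QuadraticMap.weightedSumSquares_apply, addChar_map_sum]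
      exact Finset.prod_congr rfl fun i _ => by rw [Units.smul_def, smul_eq_mul, sq]
    rw [h1]
    rw [Finset.sum_congr rfl fun x _ => h2' x]
    rw [Finset.prod_univ_sum (fun _ : Fin n => (Finset.univ : Finset F))
      (fun i y => ψ ((w i : F) * y ^ 2))]
    rw [Fintype.piFinset_univ]
  -- the square
  have hsq : S ^ 2 = ((quadraticChar F (-1) : ℤ) : ℂ) ^ n * (q : ℂ) ^ n := by
    calc S ^ 2 = ∏ i : Fin n, (∑ y : F, ψ ((w i : F) * y ^ 2)) ^ 2 := by
          rw [hS, ← Finset.prod_pow]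
      _ = ∏ _i : Fin n, ((quadraticChar F (-1) : ℤ) : ℂ) * (q : ℂ) := by
          refine Finset.prod_congr rfl fun i _ => ?_
          exact one_dim_gauss_sq hF2 ψ hψ (w i).ne_zero
      _ = (((quadraticChar F (-1) : ℤ) : ℂ) * (q : ℂ)) ^ n := by
          rw [Finset.prod_const, Finset.card_univ, Fintype.card_fin]
      _ = ((quadraticChar F (-1) : ℤ) : ℂ) ^ n * (q : ℂ) ^ n := mul_pow _ _ _
  have hχ2 : ((quadraticChar F (-1) : ℤ) : ℂ) ^ 2 = 1 := by
    have h := quadraticChar_sq_one (F := F) (a := -1) (neg_ne_zero.mpr one_ne_zero)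
    calc ((quadraticChar F (-1) : ℤ) : ℂ) ^ 2
        = (((quadraticChar F (-1)) ^ 2 : ℤ) : ℂ) := by push_cast; ring
      _ = 1 := by rw [h]; norm_num
  -- fourth power
  have hS4 : S ^ 4 = (q : ℂ) ^ (2 * n) := by
    have : S ^ 4 = (S ^ 2) ^ 2 := by ring
    rw [this, hsq, mul_pow, ← pow_mul, ← pow_mul, mul_comm n 2, pow_mul, hχ2, one_pow, one_mul]
  -- absolute value
  have hq0 : (0 : ℝ) < (q : ℝ) := by
    have : 0 < q := Fintype.card_pos
    exact_mod_cast this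
  have hrpow_sq : ((q : ℝ) ^ ((n : ℝ) / 2)) ^ 2 = (q : ℝ) ^ n := by
    rw [← Real.rpow_natCast ((q : ℝ) ^ ((n : ℝ) / 2)) 2, ← Real.rpow_mul hq0.le]
    rw [show (n : ℝ) / 2 * (2 : ℕ) = (n : ℝ) by push_cast; ring, Real.rpow_natCast]
  have habs : ‖S‖ = (q : ℝ) ^ ((n : ℝ) / 2) := by
    have h1 : ‖S‖ ^ 2 = (q : ℝ) ^ n := by
      have h2'' : ‖S ^ 2‖ = (q : ℝ) ^ n := by
        rw [hsq, norm_mul, norm_pow, norm_pow]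
        have habsχ : ‖((quadraticChar F (-1) : ℤ) : ℂ)‖ = 1 := by
          rcases quadraticChar_dichotomy (F := F) (a := -1)
            (neg_ne_zero.mpr one_ne_zero) with h | h <;> rw [h] <;> norm_num
        rw [habsχ, one_pow, one_mul]
        rw [show ((q : ℂ)) = ((q : ℝ) : ℂ) by push_cast; ring, Complex.norm_real,
          Real.norm_of_nonneg hq0.le]
      rw [← h2'', norm_pow]
    calc ‖S‖ = Real.sqrt (‖S‖ ^ 2) :=
          (Real.sqrt_sq (norm_nonneg S)).symm
      _ = Real.sqrt (((q : ℝ) ^ ((n : ℝ) / 2)) ^ 2) := by rw [h1, hrpow_sq]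
      _ = (q : ℝ) ^ ((n : ℝ) / 2) := Real.sqrt_sq (Real.rpow_nonneg hq0.le _)
  -- normalized sum
  have hc4 : ((((q : ℝ) ^ ((n : ℝ) / 2) : ℝ)) : ℂ) ^ 4 = (q : ℂ) ^ (2 * n) := by
    have h4 : ((q : ℝ) ^ ((n : ℝ) / 2)) ^ 4 = (q : ℝ) ^ (2 * n) := by
      have : ((q : ℝ) ^ ((n : ℝ) / 2)) ^ 4 = (((q : ℝ) ^ ((n : ℝ) / 2)) ^ 2) ^ 2 := by ring
      rw [this, hrpow_sq, ← pow_mul, mul_comm n 2]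
    calc ((((q : ℝ) ^ ((n : ℝ) / 2) : ℝ)) : ℂ) ^ 4
        = ((((q : ℝ) ^ ((n : ℝ) / 2)) ^ 4 : ℝ) : ℂ) := by push_cast; ring
      _ = (((q : ℝ) ^ (2 * n) : ℝ) : ℂ) := by rw [h4]
      _ = (q : ℂ) ^ (2 * n) := by push_cast; ring
  have hqC : ((q : ℂ)) ^ (2 * n) ≠ 0 := by
    apply pow_ne_zero
    exact_mod_cast hq0.ne'
  refine ⟨hsq, habs, hS4, ?_⟩
  rw [div_pow, hS4, hc4, div_self hqC]
end
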